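/- For every m ≥ 1, the subgroup of the direct product group ℂ^× × GL(m,ℂ) generated by the set {(i, R_a)·(i, R_b) : a, b ∈ ℂ^m, ∑ a_i² = ∑ b_i² = 1} is exactly {(ε, g) : ε ∈ {1,−1}, g ∈ SO(m,ℂ)}. In particular this group is isomorphic to SO(m,ℂ) × ℤ/2ℤ, and the projection (ε,g) ↦ g is a surjective homomorphism onto SO(m,ℂ) each of whose fibers has exactly two elements. -/

import Mathlib

open Matrix
open scoped MatrixGroups

/-- The reflection matrix `R_a = I - 2·aᵀa` associated to a vector `a` with `⟨a,a⟩ = 1`. -/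
noncomputable def reflMat {m : ℕ} (a : Fin m → ℂ) : Matrix (Fin m) (Fin m) ℂ :=
  1 - (2 : ℂ) • Matrix.of (fun i j => a i * a j)

/-! The generators are `(i, R_a)(i, R_b) = (-1, R_a R_b)`, and they lie in `{±1} × SO(m,ℂ)`.
Conversely, by Cartan–Dieudonné every complex orthogonal matrix is a product of reflections in
anisotropic vectors, which over `ℂ` can be rescaled to unit vectors; taking determinants, one
in `SO(m,ℂ)` is a product of an even number of them, i.e. of matrices `R_a R_b`. Since `m ≥ 1`
there is a unit vector `a`, and the generator `(-1, R_a R_a) = (-1, 1)` supplies both signs. -/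

open scoped Pointwise

namespace LinearMap.BilinForm

variable {K V : Type*} [Field K] [AddCommGroup V] [Module K V] {Φ : LinearMap.BilinForm K V}

-- Degenerates to the identity when `Φ v v = 0`.
noncomputable def reflection (Φ : LinearMap.BilinForm K V) (v : V) : Module.End K V :=
  Module.preReflection v ((2 / Φ v v) • Φ v)

lemma reflection_apply (v x : V) : Φ.reflection v x = x - (2 * Φ v x / Φ v v) • v := by
  rw [reflection, Module.preReflection_apply, LinearMap.smul_apply, smul_eq_mul,
    div_mul_eq_mul_div]

lemma two_div_smul_apply_self {v : V} (hv : Φ v v ≠ 0) : ((2 / Φ v v) • Φ v) v = 2 := by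
  rw [LinearMap.smul_apply, smul_eq_mul, div_mul_cancel₀ _ hv]

lemma reflection_apply_self {v : V} (hv : Φ v v ≠ 0) : Φ.reflection v v = -v :=
  Module.preReflection_apply_self (two_div_smul_apply_self hv)

lemma reflection_mul_self {v : V} (hv : Φ v v ≠ 0) : Φ.reflection v * Φ.reflection v = 1 :=
  LinearMap.ext (Module.involutive_preReflection (two_div_smul_apply_self hv))

lemma reflection_apply_of_eq_zero {v x : V} (h : Φ v x = 0) : Φ.reflection v x = x := by
  simp [reflection_apply, h]

lemma reflection_smul (v : V) {c : K} (hc : c ≠ 0) :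
    Φ.reflection (c • v) = Φ.reflection v := by
  ext x
  simp only [reflection_apply, map_smul, LinearMap.smul_apply, smul_eq_mul, smul_smul]
  congr 2
  by_cases hv : Φ v v = 0
  · simp [hv]
  · field_simp

lemma apply_reflection_reflection (hΦ : Φ.IsSymm) {v : V} (hv : Φ v v ≠ 0) (x y : V) :
    Φ (Φ.reflection v x) (Φ.reflection v y) = Φ x y := by
  simp only [reflection_apply, map_sub, map_smul, LinearMap.sub_apply, LinearMap.smul_apply,
    smul_eq_mul, hΦ.eq x v]
  field_simp
  ring

lemma reflection_sub_apply (hΦ : Φ.IsSymm) {x y : V} (hxy : Φ x x = Φ y y)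
    (h : Φ (x - y) (x - y) ≠ 0) : Φ.reflection (x - y) x = y := by
  have hcoef : 2 * Φ (x - y) x = Φ (x - y) (x - y) := by
    simp only [map_sub, LinearMap.sub_apply, hxy, hΦ.eq y x]
    ring
  rw [reflection_apply, hcoef, div_self h, one_smul, sub_sub_cancel]

def reflections (Φ : LinearMap.BilinForm K V) : Set (Module.End K V) :=
  Φ.reflection '' {v | Φ v v ≠ 0}

lemma reflection_mem_reflections {v : V} (hv : Φ v v ≠ 0) : Φ.reflection v ∈ Φ.reflections :=
  ⟨v, hv, rfl⟩

lemma apply_apply_of_mem_closure_reflections (hΦ : Φ.IsSymm) {f : Module.End K V}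
    (hf : f ∈ Submonoid.closure Φ.reflections) (x y : V) : Φ (f x) (f y) = Φ x y := by
  induction hf using Submonoid.closure_induction generalizing x y with
  | mem g hg => obtain ⟨v, hv, rfl⟩ := hg; exact apply_reflection_reflection hΦ hv x y
  | one => rfl
  | mul g h _ _ ihg ihh => exact (ihg (h x) (h y)).trans (ihh x y)

lemma exists_mem_closure_reflections_apply_eq [NeZero (2 : K)] (hΦ : Φ.IsSymm) {x y : V}
    (hxy : Φ x x = Φ y y) (hy : Φ y y ≠ 0) :
    ∃ s ∈ Submonoid.closure Φ.reflections, ∃ t ∈ Submonoid.closure Φ.reflections,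
      t * s = 1 ∧ s x = y := by
  by_cases hxy' : Φ (x - y) (x - y) = 0
  · -- reflect `x` to `-y` along `x + y`, then `-y` to `y` along `y`
    have hsum : Φ (x + y) (x + y) ≠ 0 := by
      have h4 : Φ (x + y) (x + y) = 2 * 2 * Φ y y := by
        have := hxy'
        simp only [map_add, map_sub, LinearMap.add_apply, LinearMap.sub_apply, hxy,
          hΦ.eq x y] at this ⊢
        linear_combination -this
      rw [h4]
      exact mul_ne_zero (mul_ne_zero two_ne_zero two_ne_zero) hy
    have hρx : Φ.reflection (x + y) x = -y := by
      rw [← sub_neg_eq_add] at hsum ⊢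
      exact reflection_sub_apply hΦ (by simpa using hxy) hsum
    have hρ := Submonoid.subset_closure (reflection_mem_reflections hsum)
    have hρy := Submonoid.subset_closure (reflection_mem_reflections hy)
    refine ⟨_, mul_mem hρy hρ, _, mul_mem hρ hρy, ?_, ?_⟩
    · rw [mul_assoc, ← mul_assoc (Φ.reflection y), reflection_mul_self hy, one_mul,
        reflection_mul_self hsum]
    · rw [Module.End.mul_apply, hρx, map_neg, reflection_apply_self hy, neg_neg]
  · exact ⟨_, Submonoid.subset_closure (reflection_mem_reflections hxy'), _,
      Submonoid.subset_closure (reflection_mem_reflections hxy'), reflection_mul_self hxy',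
      reflection_sub_apply hΦ hxy hxy'⟩

lemma exists_mem_closure_reflections_extend (hΦ : Φ.IsSymm) {v : V}
    {h : Module.End K (Φ.orthogonal (K ∙ v))}
    (hh : h ∈ Submonoid.closure (Φ.restrict (Φ.orthogonal (K ∙ v))).reflections) :
    ∃ H ∈ Submonoid.closure Φ.reflections, H v = v ∧
      ∀ w : Φ.orthogonal (K ∙ v), H w = h w := by
  induction hh using Submonoid.closure_induction with
  | mem g hg =>
    obtain ⟨u, hu, rfl⟩ := hg
    have huv : Φ u v = 0 := hΦ.eq_iff.mp (u.2 v (Submodule.mem_span_singleton_self v))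
    refine ⟨Φ.reflection u, Submonoid.subset_closure (reflection_mem_reflections hu),
      reflection_apply_of_eq_zero huv, fun w => ?_⟩
    simp [reflection_apply]
  | one => exact ⟨1, one_mem _, rfl, fun _ => rfl⟩
  | mul g₁ g₂ _ _ ih₁ ih₂ =>
    obtain ⟨H₁, hH₁, hH₁v, hH₁w⟩ := ih₁
    obtain ⟨H₂, hH₂, hH₂v, hH₂w⟩ := ih₂
    refine ⟨H₁ * H₂, mul_mem hH₁ hH₂, by simp [hH₁v, hH₂v], fun w => ?_⟩
    simp [hH₂w, hH₁w]

lemma exists_apply_self_ne_zero [NeZero (2 : K)] [Nontrivial V] (hΦ : Φ.IsSymm)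
    (hnd : Φ.Nondegenerate) : ∃ v, Φ v v ≠ 0 := by
  have : Invertible (2 : K) := invertibleOfNonzero two_ne_zero
  refine exists_bilinForm_self_ne_zero (fun hΦ0 => ?_) (isSymm_iff.mp hΦ)
  obtain ⟨x, hx⟩ := exists_ne (0 : V)
  exact hx (hnd.1 x fun y => by simp [hΦ0])

lemma mapsTo_orthogonal_span_singleton {f : Module.End K V}
    (hf : ∀ x y, Φ (f x) (f y) = Φ x y) {v : V} (hfv : f v = v) :
    Set.MapsTo f (Φ.orthogonal (K ∙ v)) (Φ.orthogonal (K ∙ v)) := by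
  intro w hw u hu
  obtain ⟨c, rfl⟩ := Submodule.mem_span_singleton.mp hu
  have hvw : Φ v w = 0 := hw v (Submodule.mem_span_singleton_self v)
  change Φ (c • v) (f w) = 0
  rw [← hfv, ← map_smul, hf, map_smul, LinearMap.smul_apply, hvw, smul_zero]

lemma eq_of_apply_eq_of_forall_orthogonal {v : V} (hv : Φ v v ≠ 0) {f g : Module.End K V}
    (hfg : f v = g v) (hW : ∀ w ∈ Φ.orthogonal (K ∙ v), f w = g w) : f = g := by
  ext x
  have hx : x ∈ (K ∙ v) ⊔ Φ.orthogonal (K ∙ v) := by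
    rw [span_singleton_sup_orthogonal_eq_top hv]
    exact Submodule.mem_top
  obtain ⟨y, hy, w, hw, rfl⟩ := Submodule.mem_sup.mp hx
  obtain ⟨c, rfl⟩ := Submodule.mem_span_singleton.mp hy
  simp [hfg, hW w hw]

/-- Cartan–Dieudonné, without the bound on the number of reflections. -/
theorem mem_closure_reflections_of_isometry [NeZero (2 : K)] [FiniteDimensional K V]
    (hΦ : Φ.IsSymm) (hnd : Φ.Nondegenerate) {f : Module.End K V}
    (hf : ∀ x y, Φ (f x) (f y) = Φ x y) : f ∈ Submonoid.closure Φ.reflections := by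
  induction hn : Module.finrank K V generalizing V with
  | zero =>
    have := Module.finrank_zero_iff.mp hn
    exact Subsingleton.elim f 1 ▸ one_mem _
  | succ n ih =>
    have : Nontrivial V := Module.nontrivial_of_finrank_eq_succ hn
    obtain ⟨v, hv⟩ := exists_apply_self_ne_zero hΦ hnd
    -- first move `f v` back to `v`, then induct on the orthogonal complement of `v`
    obtain ⟨s, hs, t, ht, hts, hsf⟩ := exists_mem_closure_reflections_apply_eq hΦ (hf v v) hv
    have hg : ∀ x y, Φ ((s * f) x) ((s * f) y) = Φ x y := fun x y =>
      (apply_apply_of_mem_closure_reflections hΦ hs _ _).trans (hf x y)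
    have hgW := mapsTo_orthogonal_span_singleton hg hsf
    have hrank : Module.finrank K (Φ.orthogonal (K ∙ v)) = n := by
      have := Submodule.finrank_add_eq_of_isCompl (isCompl_span_singleton_orthogonal hv)
      rw [finrank_span_singleton (fun h => hv (by simp [h])), hn] at this
      omega
    obtain ⟨H, hH, hHv, hHW⟩ := exists_mem_closure_reflections_extend hΦ
      (ih (hΦ.restrict _) (restrict_nondegenerate_orthogonal_spanSingleton Φ hnd hΦ.isRefl hv)
        (f := (s * f).restrict hgW) (fun x y => hg x y) hrank)
    have hgH : s * f = H :=
      eq_of_apply_eq_of_forall_orthogonal hv (hsf.trans hHv.symm) fun w hw => (hHW ⟨w, hw⟩).symm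
    rw [← one_mul f, ← hts, mul_assoc, hgH]
    exact mul_mem ht hH

end LinearMap.BilinForm

lemma Submonoid.mem_closure_mul_self_or {M : Type*} [Monoid M] {X : Set M} {y : M}
    (hy : y ∈ Submonoid.closure X) :
    y ∈ Submonoid.closure (X * X) ∨
      ∃ x ∈ X, ∃ z ∈ Submonoid.closure (X * X), x * z = y := by
  induction hy using Submonoid.closure_induction_left with
  | one => exact Or.inl (one_mem _)
  | mul_left x hx y _ ih =>
    rcases ih with hy | ⟨x', hx', z, hz, rfl⟩
    · exact Or.inr ⟨x, hx, y, hy, rfl⟩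
    · rw [← mul_assoc]
      exact Or.inl (mul_mem (Submonoid.subset_closure (Set.mul_mem_mul hx hx')) hz)

section DotProduct

variable {n R : Type*} [Fintype n] [CommRing R]

lemma dotProduct_self_eq_sum_sq (v : n → R) : v ⬝ᵥ v = ∑ i, v i ^ 2 := by
  simp [dotProduct, sq]

lemma dotProductBilin_isSymm :
    LinearMap.BilinForm.IsSymm (dotProductBilin R R : LinearMap.BilinForm R (n → R)) :=
  ⟨dotProduct_comm⟩

lemma dotProductBilin_nondegenerate [DecidableEq n] :
    LinearMap.BilinForm.Nondegenerate (dotProductBilin R R : LinearMap.BilinForm R (n → R)) := by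
  refine ⟨fun x hx => funext fun i => ?_, fun x hx => funext fun i => ?_⟩
  · simpa using hx (Pi.single i 1)
  · simpa using hx (Pi.single i 1)

end DotProduct

section ReflMat

variable {m : ℕ} {a : Fin m → ℂ}

lemma reflMat_eq (a : Fin m → ℂ) : reflMat a = 1 - (2 : ℂ) • vecMulVec a a := rfl

lemma reflMat_transpose (a : Fin m → ℂ) : (reflMat a)ᵀ = reflMat a := by
  simp [reflMat_eq]

lemma reflMat_mul_self (ha : ∑ i, a i ^ 2 = 1) : reflMat a * reflMat a = 1 := by
  have hP : vecMulVec a a * vecMulVec a a = vecMulVec a a := by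
    rw [vecMulVec_mul_vecMulVec, dotProduct_self_eq_sum_sq, ha, one_smul]
  simp only [reflMat_eq, sub_mul, mul_sub, Matrix.one_mul, Matrix.mul_one, Matrix.smul_mul,
    Matrix.mul_smul, hP, smul_smul]
  module

lemma det_reflMat (ha : ∑ i, a i ^ 2 = 1) : (reflMat a).det = -1 := by
  rw [reflMat_eq, ← vecMulVec_smul, vecMulVec_eq Unit, det_one_sub_mul_comm, det_unique,
    Matrix.sub_apply, Matrix.one_apply_eq, replicateRow_mul_replicateCol_apply, smul_dotProduct,
    dotProduct_self_eq_sum_sq, ha]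
  norm_num

lemma reflMat_mulVec (a x : Fin m → ℂ) : reflMat a *ᵥ x = x - (2 * (a ⬝ᵥ x)) • a := by
  rw [reflMat_eq, sub_mulVec, one_mulVec, smul_mulVec, vecMulVec_mulVec, op_smul_eq_smul,
    smul_smul]

lemma toLin'_reflMat (ha : ∑ i, a i ^ 2 = 1) :
    toLin' (reflMat a) = LinearMap.BilinForm.reflection (dotProductBilin ℂ ℂ) a := by
  refine LinearMap.ext fun x => ?_
  rw [toLin'_apply, reflMat_mulVec, LinearMap.BilinForm.reflection_apply]
  simp [dotProduct_self_eq_sum_sq, ha]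

/-- Over `ℂ` every anisotropic vector can be rescaled to a unit vector. -/
lemma exists_toLin'_reflMat_eq_reflection {v : Fin m → ℂ} (hv : v ⬝ᵥ v ≠ 0) :
    ∃ a, ∑ i, a i ^ 2 = 1 ∧
      toLin' (reflMat a) = LinearMap.BilinForm.reflection (dotProductBilin ℂ ℂ) v := by
  obtain ⟨c, hc⟩ := IsAlgClosed.exists_pow_nat_eq (v ⬝ᵥ v)⁻¹ two_pos
  have hc0 : c ≠ 0 := by rintro rfl; simp [eq_comm, hv] at hc
  have ha : ∑ i, (c • v) i ^ 2 = 1 := by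
    rw [← dotProduct_self_eq_sum_sq, smul_dotProduct, dotProduct_smul, smul_eq_mul,
      smul_eq_mul, ← mul_assoc, ← sq, hc, inv_mul_cancel₀ hv]
  exact ⟨c • v, ha, by rw [toLin'_reflMat ha, LinearMap.BilinForm.reflection_smul v hc0]⟩

def unitReflMats (m : ℕ) : Set (Matrix (Fin m) (Fin m) ℂ) :=
  reflMat '' {a | ∑ i, a i ^ 2 = 1}

lemma mem_closure_unitReflMats {M : Matrix (Fin m) (Fin m) ℂ} (hM : Mᵀ * M = 1) :
    M ∈ Submonoid.closure (unitReflMats m) := by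
  let toMatrix : Module.End ℂ (Fin m → ℂ) →* Matrix (Fin m) (Fin m) ℂ :=
    LinearMap.toMatrixAlgEquiv' (R := ℂ) (n := Fin m)
  have htoMatrix (N : Matrix (Fin m) (Fin m) ℂ) : toMatrix (toLin' N) = N :=
    LinearMap.toMatrixAlgEquiv'_toLinAlgEquiv' N
  have hiso (x y : Fin m → ℂ) :
      dotProductBilin ℂ ℂ (toLin' M x) (toLin' M y) = dotProductBilin ℂ ℂ x y := by
    simp [dotProduct_mulVec, ← mulVec_transpose, mulVec_mulVec, hM]
  have hle : Submonoid.closure (LinearMap.BilinForm.reflections (dotProductBilin ℂ ℂ)) ≤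
      (Submonoid.closure (unitReflMats m)).comap toMatrix := by
    refine Submonoid.closure_le.mpr ?_
    rintro _ ⟨v, hv, rfl⟩
    obtain ⟨a, ha, hρ⟩ := exists_toLin'_reflMat_eq_reflection hv
    rw [SetLike.mem_coe, Submonoid.mem_comap, ← hρ, htoMatrix]
    exact Submonoid.subset_closure ⟨a, ha, rfl⟩
  simpa only [Submonoid.mem_comap, htoMatrix] using
    hle (LinearMap.BilinForm.mem_closure_reflections_of_isometry dotProductBilin_isSymm
      dotProductBilin_nondegenerate hiso)

lemma mem_closure_unitReflMats_mul_self {M : Matrix (Fin m) (Fin m) ℂ} (hM : Mᵀ * M = 1)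
    (hdet : M.det = 1) : M ∈ Submonoid.closure (unitReflMats m * unitReflMats m) := by
  have hdet_even : Submonoid.closure (unitReflMats m * unitReflMats m) ≤
      MonoidHom.mker (detMonoidHom : Matrix (Fin m) (Fin m) ℂ →* ℂ) := by
    refine Submonoid.closure_le.mpr ?_
    rintro _ ⟨_, ⟨a, ha, rfl⟩, _, ⟨b, hb, rfl⟩, rfl⟩
    simp [det_reflMat ha, det_reflMat hb]
  refine (Submonoid.mem_closure_mul_self_or (mem_closure_unitReflMats hM)).resolve_right ?_
  rintro ⟨_, ⟨a, ha, rfl⟩, z, hz, rfl⟩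
  have hz1 : z.det = 1 := hdet_even hz
  rw [det_mul, det_reflMat ha, hz1] at hdet
  norm_num at hdet

noncomputable def reflUnit (ha : ∑ i, a i ^ 2 = 1) : GL (Fin m) ℂ :=
  ⟨reflMat a, reflMat a, reflMat_mul_self ha, reflMat_mul_self ha⟩

end ReflMat

namespace Matrix.GeneralLinearGroup

variable (n R : Type*) [Fintype n] [DecidableEq n] [CommRing R]

-- Mathlib's `Matrix.specialOrthogonalGroup` is defined through `star`, i.e. it is `SU(n)` over `ℂ`.
def specialOrthogonal : Subgroup (GL n R) where
  carrier := {g | (g : Matrix n n R)ᵀ * g = 1 ∧ (g : Matrix n n R).det = 1}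
  one_mem' := by simp
  mul_mem' := by
    rintro g h ⟨hg, hg'⟩ ⟨hh, hh'⟩
    refine ⟨?_, by simp [hg', hh']⟩
    rw [Units.val_mul, transpose_mul, Matrix.mul_assoc, ← Matrix.mul_assoc _ (g : Matrix n n R),
      hg, Matrix.one_mul, hh]
  inv_mem' := by
    rintro g ⟨hg, hg'⟩
    have hinv : ((g⁻¹ : GL n R) : Matrix n n R) = (g : Matrix n n R)ᵀ := by
      rw [coe_units_inv, inv_eq_left_inv hg]
    rw [Set.mem_ofPred_eq, hinv, transpose_transpose, det_transpose, mul_eq_one_comm]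
    exact ⟨hg, hg'⟩

end Matrix.GeneralLinearGroup

open Matrix.GeneralLinearGroup

variable {m : ℕ}

def reflectionPairs (m : ℕ) : Set (ℂˣ × GL (Fin m) ℂ) :=
  {p | ∃ a b : Fin m → ℂ, (∑ i, a i ^ 2 = 1) ∧ (∑ i, b i ^ 2 = 1) ∧
    (p.1 : ℂ) = Complex.I * Complex.I ∧
    (p.2 : Matrix (Fin m) (Fin m) ℂ) = reflMat a * reflMat b}

lemma mem_rootsOfUnity_two_iff {R : Type*} [CommRing R] [NoZeroDivisors R] {ε : Rˣ} :
    ε ∈ rootsOfUnity 2 R ↔ (ε : R) = 1 ∨ (ε : R) = -1 := by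
  rw [mem_rootsOfUnity', sq_eq_one_iff]

lemma reflectionPairs_subset_prod :
    reflectionPairs m ⊆ (rootsOfUnity 2 ℂ).prod (specialOrthogonal (Fin m) ℂ) := by
  rintro p ⟨a, b, ha, hb, hε, hg⟩
  refine ⟨mem_rootsOfUnity_two_iff.mpr (Or.inr (by rw [hε, Complex.I_mul_I])), ?_, ?_⟩
  · rw [hg, transpose_mul, reflMat_transpose, reflMat_transpose, Matrix.mul_assoc,
      ← Matrix.mul_assoc (reflMat a), reflMat_mul_self ha, Matrix.one_mul, reflMat_mul_self hb]
  · simp [hg, det_reflMat ha, det_reflMat hb]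

lemma neg_one_mem_closure_reflectionPairs (hm : 1 ≤ m) :
    ((-1 : ℂˣ), (1 : GL (Fin m) ℂ)) ∈ Subgroup.closure (reflectionPairs m) := by
  have ha : ∑ i, (Pi.single (⟨0, hm⟩ : Fin m) (1 : ℂ) : Fin m → ℂ) i ^ 2 = 1 := by
    simp [sq, Pi.single_apply]
  refine Subgroup.subset_closure ⟨_, _, ha, ha, by simp, ?_⟩
  simp [reflMat_mul_self ha]

lemma inr_mem_closure_reflectionPairs (hm : 1 ≤ m) {g : GL (Fin m) ℂ}
    (hg : g ∈ specialOrthogonal (Fin m) ℂ) :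
    ((1 : ℂˣ), g) ∈ Subgroup.closure (reflectionPairs m) := by
  set H := (Subgroup.closure (reflectionPairs m)).comap (MonoidHom.inr ℂˣ (GL (Fin m) ℂ))
  -- `(1, R_a R_b) = (-1, 1) * (i·i, R_a R_b)`
  have hle : Submonoid.closure (unitReflMats m * unitReflMats m) ≤
      H.toSubmonoid.map (Units.coeHom _) := by
    refine Submonoid.closure_le.mpr ?_
    rintro _ ⟨_, ⟨a, ha, rfl⟩, _, ⟨b, hb, rfl⟩, rfl⟩
    refine ⟨reflUnit ha * reflUnit hb, ?_, rfl⟩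
    have hpair :
        ((-1 : ℂˣ), reflUnit ha * reflUnit hb) ∈ Subgroup.closure (reflectionPairs m) :=
      Subgroup.subset_closure ⟨a, b, ha, hb, by simp, rfl⟩
    change ((1 : ℂˣ), _) ∈ Subgroup.closure (reflectionPairs m)
    simpa using mul_mem (neg_one_mem_closure_reflectionPairs hm) hpair
  obtain ⟨q, hq, hqg⟩ := hle (mem_closure_unitReflMats_mul_self hg.1 hg.2)
  rwa [Units.ext hqg] at hq

lemma closure_reflectionPairs (hm : 1 ≤ m) :
    Subgroup.closure (reflectionPairs m) =
      (rootsOfUnity 2 ℂ).prod (specialOrthogonal (Fin m) ℂ) := by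
  refine le_antisymm ((Subgroup.closure_le _).mpr reflectionPairs_subset_prod) ?_
  rintro ⟨ε, g⟩ ⟨hε, hg⟩
  have hg' := inr_mem_closure_reflectionPairs hm hg
  rcases mem_rootsOfUnity_two_iff.mp hε with hε | hε
  · rwa [show ε = 1 from Units.ext hε]
  · rw [show ε = -1 from Units.ext (by rw [hε, Units.val_neg, Units.val_one])]
    simpa using mul_mem (neg_one_mem_closure_reflectionPairs hm) hg'

noncomputable def closureReflectionPairsEquiv (hm : 1 ≤ m) :
    Subgroup.closure (reflectionPairs m) ≃*
      specialOrthogonal (Fin m) ℂ × Multiplicative (ZMod 2) :=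
  (MulEquiv.subgroupCongr (closure_reflectionPairs hm)).trans <|
    (Subgroup.prodEquiv _ _).trans <| MulEquiv.prodComm.trans <|
      MulEquiv.prodCongr (MulEquiv.refl _)
        (mulEquivOfPrimeCardEq (p := 2) (Complex.card_rootsOfUnity 2) (by simp))

lemma fiber_closure_reflectionPairs (hm : 1 ≤ m) {g : GL (Fin m) ℂ}
    (hg : g ∈ specialOrthogonal (Fin m) ℂ) :
    {p | p ∈ Subgroup.closure (reflectionPairs m) ∧ p.2 = g} = {((1 : ℂˣ), g), (-1, g)} := by
  ext ⟨ε, h⟩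
  simp only [closure_reflectionPairs hm, Subgroup.mem_prod, mem_rootsOfUnity_two_iff,
    Set.mem_ofPred_eq, Set.mem_insert_iff, Set.mem_singleton_iff, Prod.mk.injEq]
  constructor
  · rintro ⟨⟨hε | hε, -⟩, rfl⟩
    · exact Or.inl ⟨Units.ext hε, rfl⟩
    · exact Or.inr ⟨Units.ext (by simpa using hε), rfl⟩
  · rintro (⟨rfl, rfl⟩ | ⟨rfl, rfl⟩) <;> simp [hg]

theorem statement7 (m : ℕ) (hm : 1 ≤ m) :
    let S : Set (ℂˣ × GL (Fin m) ℂ) :=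
      {p | ∃ a b : Fin m → ℂ, (∑ i, a i ^ 2 = 1) ∧ (∑ i, b i ^ 2 = 1) ∧
        (p.1 : ℂ) = Complex.I * Complex.I ∧
        (p.2 : Matrix (Fin m) (Fin m) ℂ) = reflMat a * reflMat b}
    -- the generated subgroup is exactly {(ε,g) : ε = ±1, g ∈ SO(m,ℂ)}
    (∀ p : ℂˣ × GL (Fin m) ℂ,
      p ∈ Subgroup.closure S ↔
        (((p.1 : ℂ) = 1 ∨ (p.1 : ℂ) = -1) ∧
          (p.2 : Matrix (Fin m) (Fin m) ℂ)ᵀ * (p.2 : Matrix (Fin m) (Fin m) ℂ) = 1 ∧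
          (p.2 : Matrix (Fin m) (Fin m) ℂ).det = 1)) ∧
    -- it is isomorphic to SO(m,ℂ) × ℤ/2ℤ
    (∃ H : Subgroup (GL (Fin m) ℂ),
      ((H : Set (GL (Fin m) ℂ)) = {g : GL (Fin m) ℂ | (g : Matrix (Fin m) (Fin m) ℂ)ᵀ *
          (g : Matrix (Fin m) (Fin m) ℂ) = 1 ∧ (g : Matrix (Fin m) (Fin m) ℂ).det = 1}) ∧
      Nonempty ((Subgroup.closure S) ≃* H × Multiplicative (ZMod 2))) ∧
    -- the projection onto SO(m,ℂ) is surjective with fibers of exactly two elements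
    (∀ g : GL (Fin m) ℂ,
      ((g : Matrix (Fin m) (Fin m) ℂ)ᵀ * (g : Matrix (Fin m) (Fin m) ℂ) = 1 ∧
        (g : Matrix (Fin m) (Fin m) ℂ).det = 1) →
      (∃ p ∈ Subgroup.closure S, p.2 = g) ∧
      ({p : ℂˣ × GL (Fin m) ℂ | p ∈ Subgroup.closure S ∧ p.2 = g}).ncard = 2) := by
  intro S
  have hS : S = reflectionPairs m := rfl
  have hmem (p : ℂˣ × GL (Fin m) ℂ) : p ∈ Subgroup.closure S ↔
      ((p.1 : ℂ) = 1 ∨ (p.1 : ℂ) = -1) ∧ p.2 ∈ specialOrthogonal (Fin m) ℂ := by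
    rw [hS, closure_reflectionPairs hm, Subgroup.mem_prod, mem_rootsOfUnity_two_iff]
  refine ⟨hmem, ⟨specialOrthogonal (Fin m) ℂ, rfl, ⟨closureReflectionPairsEquiv hm⟩⟩,
    fun g hg => ⟨⟨(1, g), (hmem _).mpr ⟨Or.inl rfl, hg⟩, rfl⟩, ?_⟩⟩
  rw [hS, fiber_closure_reflectionPairs hm hg, Set.ncard_pair]
  simp [Prod.ext_iff]
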